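/- Let (Ω, μ) be a measure space and A ⊆ Ω measurable with μ(A) ≠ 0. Let p₁, p₂ : Ω → [0,∞) be measurable, integrable, and suppose p₁(x) + p₂(x) > 0 for μ-a.e. x ∈ A. Let φ : [0,∞)² → [0,∞) be continuous, concave, strictly increasing in each coordinate, with φ(0,0)=0 and lim_{t→∞} φ(tz) = ∞ for nonzero z. Write S = ∫_A +̃_φ(p₁, p₂) dμ, P₁ = ∫_A p₁ dμ, P₂ = ∫_A p₂ dμ. Then 0 < S < ∞ and φ(P₁/S, P₂/S) ≥ 1. -/

import Mathlib

/-!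
For `a, b ≥ 0` with `a + b > 0`, the map `l ↦ φ(a/l, b/l)` decreases strictly and continuously
from `∞` to `0` on `(0, ∞)`, so the `sInf` defining `orliczAdd φ a b` is that of a single root.
Hence `f = +̃_φ(p₁, p₂)` satisfies `φ(p₁/f, p₂/f) = 1` a.e. on `A`. It is measurable because
`f < r ↔ φ(p₁/r, p₂/r) < 1`, and integrable because `f ≤ (p₁ + p₂) · +̃_φ(1, 1)`.
Jensen's inequality for the concave `φ` and the probability measure `f dμ / S` on `A`,
applied to `(p₁/f, p₂/f)`, whose `f dμ`-integral is `(P₁, P₂)`, gives `1 ≤ φ(P₁/S, P₂/S)`.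
-/

open Filter Set MeasureTheory

/-- The Orlicz addition of two nonnegative numbers: the unique `λ > 0` with
`φ(a/λ, b/λ) = 1` when `a + b > 0`, and `0` when `a = b = 0`. -/
noncomputable def orliczAdd (φ : ℝ → ℝ → ℝ) (a b : ℝ) : ℝ :=
  sInf {l : ℝ | 0 < l ∧ φ (a / l) (b / l) = 1}

open scoped Topology ENNReal

theorem ContinuousOn.comp_measurable {α β γ : Type*} [MeasurableSpace α] [TopologicalSpace β]
    [MeasurableSpace β] [OpensMeasurableSpace β] [TopologicalSpace γ] [MeasurableSpace γ]
    [BorelSpace γ] {g : β → γ} {s : Set β} (hg : ContinuousOn g s) {f : α → β}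
    (hf : Measurable f) (hfs : ∀ x, f x ∈ s) : Measurable (g ∘ f) :=
  (continuousOn_iff_continuous_domRestrict.mp hg).measurable.comp (hf.subtype_mk (h := hfs))

theorem setIntegral_pos_of_ae_pos {α : Type*} [MeasurableSpace α] {μ : Measure α} {s : Set α}
    {f : α → ℝ} (hf : IntegrableOn f s μ) (hpos : ∀ᵐ x ∂μ.restrict s, 0 < f x) (hs : μ s ≠ 0) :
    0 < ∫ x in s, f x ∂μ := by
  have hsupp : Function.support f ∈ ae (μ.restrict s) := hpos.mono fun _ hx => hx.ne'
  rw [integral_pos_iff_support_of_nonneg_ae (hpos.mono fun _ hx => hx.le) hf,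
    measure_congr (eventuallyEq_univ.mpr hsupp), Measure.restrict_apply_univ]
  exact pos_iff_ne_zero.mpr hs

theorem ConcaveOn.le_map_weighted_average_of_ae_eq {α E : Type*} [MeasurableSpace α]
    {μ : Measure α} [NormedAddCommGroup E] [NormedSpace ℝ E] [CompleteSpace E] {s : Set E}
    {g : E → ℝ} (hg : ConcaveOn ℝ s g) (hgc : ContinuousOn g s) (hsc : IsClosed s)
    {w : α → ℝ} (hwi : Integrable w μ) (hw0 : 0 ≤ᵐ[μ] w) (hwpos : 0 < ∫ x, w x ∂μ)
    {F : α → E} (hFs : ∀ᵐ x ∂μ, F x ∈ s) (hwF : Integrable (fun x => w x • F x) μ)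
    {c : ℝ} (hgF : ∀ᵐ x ∂μ, g (F x) = c) :
    c ≤ g ((∫ x, w x ∂μ)⁻¹ • ∫ x, w x • F x ∂μ) := by
  set ν := μ.withDensity fun x => ((w x).toNNReal : ℝ≥0∞)
  have hwm : AEMeasurable (fun x => (w x).toNNReal) μ := hwi.aemeasurable.real_toNNReal
  have hνμ : ν ≪ μ := withDensity_absolutelyContinuous μ _
  have hν : ν univ = ENNReal.ofReal (∫ x, w x ∂μ) := by
    rw [withDensity_apply _ MeasurableSet.univ, Measure.restrict_univ]
    exact (ofReal_integral_eq_lintegral_ofReal hwi hw0).symm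
  have : IsFiniteMeasure ν := ⟨by rw [hν]; exact ENNReal.ofReal_lt_top⟩
  have : NeZero ν := ⟨fun h => by simp [h] at hν; linarith⟩
  have hsmul : (fun x => (w x).toNNReal • F x) =ᵐ[μ] fun x => w x • F x := by
    filter_upwards [hw0] with x hx
    rw [NNReal.smul_def, Real.coe_toNNReal _ hx]
  have hgFν : (fun x => g (F x)) =ᵐ[ν] fun _ => c := hνμ.ae_le hgF
  have hjensen := hg.le_map_average hgc hsc (hνμ.ae_le hFs)
    ((integrable_withDensity_iff_integrable_smul₀ hwm).mpr (hwF.congr hsmul.symm))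
    ((integrable_const c).congr hgFν.symm)
  rwa [average_congr hgFν, average_const, average_eq, measureReal_def, hν,
    ENNReal.toReal_ofReal hwpos.le, integral_withDensity_eq_integral_smul₀ hwm,
    integral_congr_ae hsmul] at hjensen

section OrliczCurve

variable {φ : ℝ → ℝ → ℝ} {a b : ℝ}

theorem strictAntiOn_apply_div
    (hm1 : ∀ y : ℝ, 0 ≤ y → StrictMonoOn (fun x => φ x y) (Ici 0))
    (hm2 : ∀ x : ℝ, 0 ≤ x → StrictMonoOn (fun y => φ x y) (Ici 0))
    (ha : 0 ≤ a) (hb : 0 ≤ b) (hab : 0 < a + b) :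
    StrictAntiOn (fun l => φ (a / l) (b / l)) (Ioi 0) := by
  intro l (hl : 0 < l) l' (hl' : 0 < l') hll'
  have hb' : 0 ≤ b / l' := div_nonneg hb hl'.le
  have hbb : b / l' ≤ b / l := by gcongr
  rcases ha.lt_or_eq with ha | rfl
  · calc φ (a / l') (b / l') < φ (a / l) (b / l') :=
          hm1 _ hb' (div_nonneg ha.le hl'.le) (div_nonneg ha.le hl.le) (by gcongr)
      _ ≤ φ (a / l) (b / l) := (hm2 _ (div_nonneg ha.le hl.le)).monotoneOn hb' (hb'.trans hbb) hbb
  · simp only [zero_div]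
    exact hm2 0 le_rfl hb' (hb'.trans hbb) (by gcongr; linarith)

theorem continuousOn_apply_div
    (hc : ContinuousOn (fun z : ℝ × ℝ => φ z.1 z.2) (Ici 0 ×ˢ Ici 0)) (ha : 0 ≤ a) (hb : 0 ≤ b) :
    ContinuousOn (fun l => φ (a / l) (b / l)) (Ioi 0) :=
  hc.comp (f := fun l => (a / l, b / l))
    ((continuousOn_const.div continuousOn_id fun _ hl => ne_of_gt hl).prodMk
      (continuousOn_const.div continuousOn_id fun _ hl => ne_of_gt hl))
    fun _ hl => ⟨div_nonneg ha (le_of_lt hl), div_nonneg hb (le_of_lt hl)⟩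

theorem tendsto_apply_div_atTop
    (hc : ContinuousOn (fun z : ℝ × ℝ => φ z.1 z.2) (Ici 0 ×ˢ Ici 0)) (h0 : φ 0 0 = 0)
    (ha : 0 ≤ a) (hb : 0 ≤ b) :
    Tendsto (fun l => φ (a / l) (b / l)) atTop (𝓝 0) := by
  have hq : Tendsto (fun l : ℝ => (a / l, b / l)) atTop (𝓝[Ici 0 ×ˢ Ici 0] (0, 0)) :=
    tendsto_nhdsWithin_of_tendsto_nhds_of_eventually_within _
      ((tendsto_const_nhds.div_atTop tendsto_id).prodMk_nhds
        (tendsto_const_nhds.div_atTop tendsto_id))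
      ((eventually_gt_atTop 0).mono fun _ hl => ⟨div_nonneg ha hl.le, div_nonneg hb hl.le⟩)
  simpa [h0, Function.comp_def] using (hc (0, 0) ⟨self_mem_Ici, self_mem_Ici⟩).tendsto.comp hq

theorem tendsto_apply_div_nhdsGT_zero
    (hlim : Tendsto (fun t => φ (t * a) (t * b)) atTop atTop) :
    Tendsto (fun l => φ (a / l) (b / l)) (𝓝[>] 0) atTop :=
  (hlim.comp tendsto_inv_nhdsGT_zero).congr fun l => by simp [div_eq_inv_mul]

theorem exists_apply_div_eq_one
    (hc : ContinuousOn (fun z : ℝ × ℝ => φ z.1 z.2) (Ici 0 ×ˢ Ici 0)) (h0 : φ 0 0 = 0)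
    (hlim : Tendsto (fun t => φ (t * a) (t * b)) atTop atTop) (ha : 0 ≤ a) (hb : 0 ≤ b) :
    ∃ l, 0 < l ∧ φ (a / l) (b / l) = 1 :=
  isPreconnected_Ioi.intermediate_value_Ioi (le_principal_iff.mpr (Ioi_mem_atTop 0))
    (le_principal_iff.mpr self_mem_nhdsWithin) (continuousOn_apply_div hc ha hb)
    (tendsto_apply_div_atTop hc h0 ha hb) (tendsto_apply_div_nhdsGT_zero hlim)
    (one_pos (α := ℝ))

end OrliczCurve

theorem orliczAdd_nonneg (φ : ℝ → ℝ → ℝ) (a b : ℝ) : 0 ≤ orliczAdd φ a b :=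
  Real.sInf_nonneg fun _ hl => hl.1.le

theorem orliczAdd_zero_zero {φ : ℝ → ℝ → ℝ} (h0 : φ 0 0 = 0) : orliczAdd φ 0 0 = 0 := by
  simp [orliczAdd, h0]

theorem orliczAdd_eq_of_apply_div_eq_one {φ : ℝ → ℝ → ℝ}
    (hm1 : ∀ y : ℝ, 0 ≤ y → StrictMonoOn (fun x => φ x y) (Ici 0))
    (hm2 : ∀ x : ℝ, 0 ≤ x → StrictMonoOn (fun y => φ x y) (Ici 0))
    {a b l : ℝ} (ha : 0 ≤ a) (hb : 0 ≤ b) (hab : 0 < a + b) (hl : 0 < l)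
    (h : φ (a / l) (b / l) = 1) : orliczAdd φ a b = l := by
  have hsol : {l' | 0 < l' ∧ φ (a / l') (b / l') = 1} = {l} :=
    eq_singleton_iff_unique_mem.mpr ⟨⟨hl, h⟩, fun l' hl' =>
      (strictAntiOn_apply_div hm1 hm2 ha hb hab).injOn hl'.1 hl (hl'.2.trans h.symm)⟩
  rw [orliczAdd, hsol, csInf_singleton]

structure IsOrliczFunction (φ : ℝ → ℝ → ℝ) : Prop where
  continuousOn : ContinuousOn (fun z : ℝ × ℝ => φ z.1 z.2) (Ici 0 ×ˢ Ici 0)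
  strictMonoOn_left : ∀ y : ℝ, 0 ≤ y → StrictMonoOn (fun x => φ x y) (Ici 0)
  strictMonoOn_right : ∀ x : ℝ, 0 ≤ x → StrictMonoOn (fun y => φ x y) (Ici 0)
  map_zero_zero : φ 0 0 = 0
  tendsto_atTop : ∀ z₁ z₂ : ℝ, 0 ≤ z₁ → 0 ≤ z₂ → (z₁, z₂) ≠ (0, 0) →
    Tendsto (fun t => φ (t * z₁) (t * z₂)) atTop atTop

namespace IsOrliczFunction

variable {φ : ℝ → ℝ → ℝ} {a b : ℝ}

theorem orliczAdd_spec (hφ : IsOrliczFunction φ) (ha : 0 ≤ a) (hb : 0 ≤ b) (hab : 0 < a + b) :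
    0 < orliczAdd φ a b ∧ φ (a / orliczAdd φ a b) (b / orliczAdd φ a b) = 1 := by
  have hne : (a, b) ≠ (0, 0) := fun h => by simp_all
  obtain ⟨l, hl, h⟩ := exists_apply_div_eq_one hφ.continuousOn hφ.map_zero_zero
    (hφ.tendsto_atTop a b ha hb hne) ha hb
  rw [orliczAdd_eq_of_apply_div_eq_one hφ.strictMonoOn_left hφ.strictMonoOn_right ha hb hab hl h]
  exact ⟨hl, h⟩

theorem orliczAdd_lt_iff (hφ : IsOrliczFunction φ) (ha : 0 ≤ a) (hb : 0 ≤ b) {r : ℝ}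
    (hr : 0 < r) : orliczAdd φ a b < r ↔ φ (a / r) (b / r) < 1 := by
  rcases (add_nonneg ha hb).lt_or_eq with hab | hab
  · obtain ⟨hpos, hone⟩ := hφ.orliczAdd_spec ha hb hab
    rw [← hone]
    exact (StrictAntiOn.lt_iff_gt
      (strictAntiOn_apply_div hφ.strictMonoOn_left hφ.strictMonoOn_right ha hb hab) hr hpos).symm
  · obtain ⟨rfl, rfl⟩ : a = 0 ∧ b = 0 := ⟨by linarith, by linarith⟩
    simp [orliczAdd_zero_zero hφ.map_zero_zero, hφ.map_zero_zero, hr]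

theorem orliczAdd_le_mul (hφ : IsOrliczFunction φ) (ha : 0 ≤ a) (hb : 0 ≤ b) :
    orliczAdd φ a b ≤ (a + b) * orliczAdd φ 1 1 := by
  obtain ⟨hk, hk1⟩ := hφ.orliczAdd_spec zero_le_one zero_le_one (by norm_num)
  set k := orliczAdd φ 1 1
  rcases (add_nonneg ha hb).lt_or_eq with hab | hab
  · obtain ⟨hpos, hone⟩ := hφ.orliczAdd_spec ha hb hab
    have hr : 0 < (a + b) * k := mul_pos hab hk
    have hdiv : ∀ c, c ≤ a + b → c / ((a + b) * k) ≤ 1 / k := fun c hcab =>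
      calc c / ((a + b) * k) ≤ (a + b) / ((a + b) * k) := by gcongr
        _ = 1 / k := by field_simp
    rw [← StrictAntiOn.le_iff_ge
      (strictAntiOn_apply_div hφ.strictMonoOn_left hφ.strictMonoOn_right ha hb hab) hr hpos,
      hone, ← hk1]
    have hk' : 0 ≤ 1 / k := by positivity
    calc φ (a / ((a + b) * k)) (b / ((a + b) * k)) ≤ φ (1 / k) (b / ((a + b) * k)) :=
          (hφ.strictMonoOn_left _ (div_nonneg hb hr.le)).monotoneOn
            (div_nonneg ha hr.le) hk' (hdiv a (by linarith))
      _ ≤ φ (1 / k) (1 / k) :=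
          (hφ.strictMonoOn_right _ hk').monotoneOn (div_nonneg hb hr.le) hk'
            (hdiv b (by linarith))
  · obtain ⟨rfl, rfl⟩ : a = 0 ∧ b = 0 := ⟨by linarith, by linarith⟩
    simp [orliczAdd_zero_zero hφ.map_zero_zero]

variable {α : Type*} [MeasurableSpace α] {p₁ p₂ : α → ℝ}

theorem measurable_orliczAdd (hφ : IsOrliczFunction φ) (hp₁ : Measurable p₁)
    (hp₂ : Measurable p₂) (hp₁0 : ∀ x, 0 ≤ p₁ x) (hp₂0 : ∀ x, 0 ≤ p₂ x) :
    Measurable fun x => orliczAdd φ (p₁ x) (p₂ x) := by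
  refine measurable_of_Iio fun r => ?_
  rcases le_or_gt r 0 with hr | hr
  · convert MeasurableSet.empty
    ext x
    simpa using hr.trans (orliczAdd_nonneg φ _ _)
  · have hlevel : (fun x => orliczAdd φ (p₁ x) (p₂ x)) ⁻¹' Iio r =
        {x | φ (p₁ x / r) (p₂ x / r) < 1} := by
      ext x
      exact hφ.orliczAdd_lt_iff (hp₁0 x) (hp₂0 x) hr
    rw [hlevel]
    exact measurableSet_lt (hφ.continuousOn.comp_measurable
      ((hp₁.div_const r).prodMk (hp₂.div_const r))
      fun x => ⟨div_nonneg (hp₁0 x) hr.le, div_nonneg (hp₂0 x) hr.le⟩) measurable_const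

theorem integrable_orliczAdd (hφ : IsOrliczFunction φ) {μ : Measure α} (hp₁ : Measurable p₁)
    (hp₂ : Measurable p₂) (hp₁0 : ∀ x, 0 ≤ p₁ x) (hp₂0 : ∀ x, 0 ≤ p₂ x)
    (hp₁i : Integrable p₁ μ) (hp₂i : Integrable p₂ μ) :
    Integrable (fun x => orliczAdd φ (p₁ x) (p₂ x)) μ :=
  ((hp₁i.add hp₂i).mul_const _).mono'
    (hφ.measurable_orliczAdd hp₁ hp₂ hp₁0 hp₂0).aestronglyMeasurable
    (ae_of_all _ fun x => by
      rw [Real.norm_of_nonneg (orliczAdd_nonneg φ _ _)]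
      exact hφ.orliczAdd_le_mul (hp₁0 x) (hp₂0 x))

end IsOrliczFunction

theorem dual_functional_orlicz_brunn_minkowski_concave_general
    {Ω : Type*} [MeasurableSpace Ω] (μ : Measure Ω)
    (A : Set Ω) (hA0 : μ A ≠ 0)
    (p₁ p₂ : Ω → ℝ) (hp₁m : Measurable p₁) (hp₂m : Measurable p₂)
    (hp₁0 : ∀ x, 0 ≤ p₁ x) (hp₂0 : ∀ x, 0 ≤ p₂ x)
    (hp₁i : Integrable p₁ μ) (hp₂i : Integrable p₂ μ)
    (hpos : ∀ᵐ x ∂(μ.restrict A), 0 < p₁ x + p₂ x)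
    (φ : ℝ → ℝ → ℝ)
    (hconc : ConcaveOn ℝ (Set.Ici 0 ×ˢ Set.Ici 0) (fun z : ℝ × ℝ => φ z.1 z.2))
    (hc : ContinuousOn (fun z : ℝ × ℝ => φ z.1 z.2) (Set.Ici 0 ×ˢ Set.Ici 0))
    (hm1 : ∀ y : ℝ, 0 ≤ y → StrictMonoOn (fun x => φ x y) (Set.Ici 0))
    (hm2 : ∀ x : ℝ, 0 ≤ x → StrictMonoOn (fun y => φ x y) (Set.Ici 0))
    (h0 : φ 0 0 = 0)
    (hlim : ∀ z₁ z₂ : ℝ, 0 ≤ z₁ → 0 ≤ z₂ → (z₁, z₂) ≠ (0, 0) →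
      Tendsto (fun t => φ (t * z₁) (t * z₂)) atTop atTop) :
    IntegrableOn (fun x => orliczAdd φ (p₁ x) (p₂ x)) A μ ∧
      0 < ∫ x in A, orliczAdd φ (p₁ x) (p₂ x) ∂μ ∧
      1 ≤ φ ((∫ x in A, p₁ x ∂μ) / ∫ x in A, orliczAdd φ (p₁ x) (p₂ x) ∂μ)
            ((∫ x in A, p₂ x ∂μ) / ∫ x in A, orliczAdd φ (p₁ x) (p₂ x) ∂μ) := by
  have hφ : IsOrliczFunction φ := ⟨hc, hm1, hm2, h0, hlim⟩
  set f := fun x => orliczAdd φ (p₁ x) (p₂ x)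
  have hspec : ∀ᵐ x ∂μ.restrict A, 0 < f x ∧ φ (p₁ x / f x) (p₂ x / f x) = 1 :=
    hpos.mono fun x hx => hφ.orliczAdd_spec (hp₁0 x) (hp₂0 x) hx
  have hfi : IntegrableOn f A μ :=
    (hφ.integrable_orliczAdd hp₁m hp₂m hp₁0 hp₂0 hp₁i hp₂i).integrableOn
  have hS : 0 < ∫ x in A, f x ∂μ := setIntegral_pos_of_ae_pos hfi (hspec.mono fun _ hx => hx.1) hA0
  refine ⟨hfi, hS, ?_⟩
  have hweight : (fun x => f x • (p₁ x / f x, p₂ x / f x)) =ᵐ[μ.restrict A]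
      fun x => (p₁ x, p₂ x) := by
    filter_upwards [hspec] with x hx
    simp [mul_div_cancel₀ _ hx.1.ne']
  have hjensen := hconc.le_map_weighted_average_of_ae_eq hc (isClosed_Ici.prod isClosed_Ici)
    (F := fun x => (p₁ x / f x, p₂ x / f x)) hfi (ae_of_all _ fun x => orliczAdd_nonneg φ _ _) hS
    (ae_of_all _ fun x =>
      ⟨div_nonneg (hp₁0 x) (orliczAdd_nonneg φ _ _), div_nonneg (hp₂0 x) (orliczAdd_nonneg φ _ _)⟩)
    ((hp₁i.integrableOn.prodMk hp₂i.integrableOn).congr hweight.symm)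
    (hspec.mono fun _ hx => hx.2)
  rwa [integral_congr_ae hweight, integral_pair hp₁i.integrableOn hp₂i.integrableOn,
    Prod.smul_mk, smul_eq_mul, smul_eq_mul, inv_mul_eq_div, inv_mul_eq_div] at hjensen

theorem dual_functional_orlicz_brunn_minkowski_concave
    {Ω : Type*} [MeasurableSpace Ω] (μ : Measure Ω)
    (A : Set Ω) (hA : MeasurableSet A) (hA0 : μ A ≠ 0)
    (p₁ p₂ : Ω → ℝ) (hp₁m : Measurable p₁) (hp₂m : Measurable p₂)
    (hp₁0 : ∀ x, 0 ≤ p₁ x) (hp₂0 : ∀ x, 0 ≤ p₂ x)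
    (hp₁i : Integrable p₁ μ) (hp₂i : Integrable p₂ μ)
    (hpos : ∀ᵐ x ∂(μ.restrict A), 0 < p₁ x + p₂ x)
    (φ : ℝ → ℝ → ℝ)
    (hconc : ConcaveOn ℝ (Set.Ici 0 ×ˢ Set.Ici 0) (fun z : ℝ × ℝ => φ z.1 z.2))
    (hc : ContinuousOn (fun z : ℝ × ℝ => φ z.1 z.2) (Set.Ici 0 ×ˢ Set.Ici 0))
    (hm1 : ∀ y : ℝ, 0 ≤ y → StrictMonoOn (fun x => φ x y) (Set.Ici 0))
    (hm2 : ∀ x : ℝ, 0 ≤ x → StrictMonoOn (fun y => φ x y) (Set.Ici 0))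
    (h0 : φ 0 0 = 0)
    (hlim : ∀ z₁ z₂ : ℝ, 0 ≤ z₁ → 0 ≤ z₂ → (z₁, z₂) ≠ (0, 0) →
      Tendsto (fun t => φ (t * z₁) (t * z₂)) atTop atTop) :
    IntegrableOn (fun x => orliczAdd φ (p₁ x) (p₂ x)) A μ ∧
      0 < ∫ x in A, orliczAdd φ (p₁ x) (p₂ x) ∂μ ∧
      1 ≤ φ ((∫ x in A, p₁ x ∂μ) / ∫ x in A, orliczAdd φ (p₁ x) (p₂ x) ∂μ)
            ((∫ x in A, p₂ x ∂μ) / ∫ x in A, orliczAdd φ (p₁ x) (p₂ x) ∂μ) :=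
  dual_functional_orlicz_brunn_minkowski_concave_general μ A hA0 p₁ p₂ hp₁m hp₂m hp₁0 hp₂0 hp₁i hp₂i
    hpos φ hconc hc hm1 hm2 h0 hlim
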